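/- Let μ ∈ ℝ, σ > 0, t ∈ ℝ, σ_γ > 0 and y ∈ ℝ. Then the threshold-weighted CRPS with Gaussian weighting measure γ₂ centered at t with scale σ_γ is invariant under reflection of both the predictive mean and the observation about the threshold: CRPS_{γ₂}(Φ_{μ,σ²}, y) = CRPS_{γ₂}(Φ_{2t−μ, σ²}, 2t − y). -/
import Mathlib


open MeasureTheory ProbabilityTheory Set
open scoped NNReal ENNReal

noncomputable section

/-- The standard normal distribution `N(0,1)` on `ℝ`. -/
def stdNormal : Measure ℝ := gaussianReal 0 1

/-- The standard normal CDF `Φ`. -/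
def Phi (x : ℝ) : ℝ := (stdNormal (Iic x)).toReal

/-- The standard normal PDF `φ`. -/
def stdPDF (x : ℝ) : ℝ := (Real.sqrt (2 * Real.pi))⁻¹ * Real.exp (-(x ^ 2) / 2)

/-- The CDF of the normal distribution `N(μ, σ²)`: `Φ_{μ,σ²}(u) = Φ((u - μ)/σ)`. -/
def normCDF (μ σ : ℝ) (u : ℝ) : ℝ := Phi ((u - μ) / σ)

/-- The normal distribution `N(μ, σ²)` as a measure on `ℝ`. -/
def gaussMeasure (μ σ : ℝ) : Measure ℝ := gaussianReal μ ⟨σ ^ 2, sq_nonneg σ⟩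

/-- Threshold-weighted CRPS of a predictive CDF `F` at observation `y`, with weighting
measure `γ`: `∫ (F u - 1{y ≤ u})² dγ(u)`. -/
def twCRPS (γ : Measure ℝ) (F : ℝ → ℝ) (y : ℝ) : ℝ :=
  ∫ u, (F u - (Ici y).indicator (fun _ => (1 : ℝ)) u) ^ 2 ∂γ

/-- Expected threshold-weighted CRPS of the Gaussian `N(μ, σ²)` with weighting measure `γ`:
the expectation of `y ↦ CRPS_γ(Φ_{μ,σ²}, y)` for `y ∼ N(μ, σ²)`. -/
def etwCRPS (γ : Measure ℝ) (μ σ : ℝ) : ℝ :=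
  ∫ y, twCRPS γ (normCDF μ σ) y ∂(gaussMeasure μ σ)

/-- `γ₁`: the Borel measure on `ℝ` with Lebesgue density `u ↦ 1{u ≥ t}`. -/
def gamma1 (t : ℝ) : Measure ℝ :=
  volume.withDensity ((Ici t).indicator fun _ => (1 : ENNReal))

/-- `γ₂`: the Borel measure on `ℝ` with Lebesgue density `u ↦ (1/σγ) φ((u - t)/σγ)`. -/
def gamma2 (t σγ : ℝ) : Measure ℝ :=
  volume.withDensity fun u => ENNReal.ofReal (1 / σγ * stdPDF ((u - t) / σγ))

end

lemma stdPDF_neg (x : ℝ) : stdPDF (-x) = stdPDF x := by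
  simp [stdPDF, neg_pow]

lemma stdPDF_continuous : Continuous stdPDF := by
  unfold stdPDF; fun_prop

lemma stdNormal_map_neg : stdNormal.map (fun x => (-1 : ℝ) * x) = stdNormal := by
  rw [stdNormal, gaussianReal_map_const_mul]
  congr 1
  · ring
  · ext; norm_num

lemma Phi_neg (x : ℝ) : Phi (-x) = 1 - Phi x := by
  have habs : stdNormal ≪ volume := gaussianReal_absolutelyContinuous 0 one_ne_zero
  have hprob : IsProbabilityMeasure stdNormal := by
    unfold stdNormal; infer_instance
  have h1 : stdNormal (Iic (-x)) = stdNormal (Ici x) := by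
    conv_lhs => rw [← stdNormal_map_neg]
    rw [Measure.map_apply (by fun_prop) measurableSet_Iic]
    congr 1
    ext u
    simp only [mem_preimage, mem_Iic, mem_Ici]
    constructor <;> intro h <;> linarith
  have h2 : stdNormal (Ici x) = stdNormal (Ioi x) := by
    rw [← Ioi_union_left]
    exact measure_congr (union_ae_eq_left_of_ae_eq_empty (ae_eq_empty.mpr (habs (by simp))))
  have h3 : stdNormal (Iic x) + stdNormal (Ioi x) = 1 := by
    rw [← measure_union (Iic_disjoint_Ioi le_rfl) measurableSet_Ioi, Iic_union_Ioi,
      measure_univ]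
  have hfin : stdNormal (Iic x) ≠ ⊤ := measure_ne_top _ _
  have hfin2 : stdNormal (Ioi x) ≠ ⊤ := measure_ne_top _ _
  unfold Phi
  rw [h1, h2]
  have := congrArg ENNReal.toReal h3
  rw [ENNReal.toReal_add hfin hfin2] at this
  simp at this
  linarith

theorem stmt_13 (μ σ t σγ y : ℝ) (hσ : 0 < σ) (hσγ : 0 < σγ) :
    twCRPS (gamma2 t σγ) (normCDF μ σ) y =
      twCRPS (gamma2 t σγ) (normCDF (2 * t - μ) σ) (2 * t - y) := by
  set w : ℝ → ℝ≥0 := fun u => Real.toNNReal (1 / σγ * stdPDF ((u - t) / σγ)) with hw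
  have hwmeas : Measurable w := by
    apply Measurable.real_toNNReal
    exact (measurable_const.mul ((stdPDF_continuous.measurable).comp (by fun_prop)))
  have hγ : gamma2 t σγ = volume.withDensity fun u => ((w u : ℝ≥0) : ENNReal) := by
    rfl
  have hwsym : ∀ u : ℝ, w (2 * t - u) = w u := by
    intro u
    have : (2 * t - u - t) / σγ = -((u - t) / σγ) := by ring
    simp [hw, this, stdPDF_neg]
  unfold twCRPS
  rw [hγ, integral_withDensity_eq_integral_smul hwmeas,
    integral_withDensity_eq_integral_smul hwmeas]
  rw [← integral_sub_left_eq_self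
    (fun u => w u • (normCDF μ σ u - (Ici y).indicator (fun _ => (1:ℝ)) u) ^ 2)
    volume (2 * t)]
  apply integral_congr_ae
  have hnull : (volume : Measure ℝ) {2 * t - y} = 0 := by simp
  filter_upwards [compl_mem_ae_iff.mpr hnull] with u hu
  simp only [mem_compl_iff, mem_singleton_iff] at hu
  have hcdf : normCDF μ σ (2 * t - u) = 1 - normCDF (2 * t - μ) σ u := by
    unfold normCDF
    have : (2 * t - u - μ) / σ = -((u - (2 * t - μ)) / σ) := by ring
    rw [this, Phi_neg]
  have hind : (Ici y).indicator (fun _ => (1:ℝ)) (2 * t - u)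
      = 1 - (Ici (2 * t - y)).indicator (fun _ => (1:ℝ)) u := by
    by_cases h : u ≤ 2 * t - y
    · have h' : u < 2 * t - y := lt_of_le_of_ne h hu
      rw [indicator_of_mem (by simp [mem_Ici]; linarith), indicator_of_notMem (by
        simp [mem_Ici]; linarith)]
      norm_num
    · push_neg at h
      rw [indicator_of_notMem (by simp only [mem_Ici, not_le]; linarith),
        indicator_of_mem (by simp only [mem_Ici]; linarith)]
      norm_num
  simp only [hwsym, hcdf, hind]
  congr 1
  ring
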